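/- arXiv:1206.6367 — 2 statements merged into one kernel-verified Lean document; each statement's English description precedes it below -/
import Mathlib

section
/- For any D : Fin m → ℝ summing to 0, if D is sorted in nonincreasing order, then the Kolmogorov-Smirnov statistic max_{1 ≤ k ≤ m} |∑_{j=1}^k D(j)| equals half the l¹ norm, i.e., (1/2)·∑_{j=1}^m |D(j)|. -/
/-- The (discrete) Kolmogorov-Smirnov statistic of `D`: the maximum over
`k = 1, ..., m` (including the trivial `k = 0`) of the absolute value of the
partial sum of the first `k` entries of `D`. -/
noncomputable def ks (m : ℕ) (D : Fin m → ℝ) : ℝ :=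
  (Finset.range (m + 1)).sup' (by simp) fun k => |∑ j : Fin m, if (j : ℕ) < k then D j else 0|

theorem ks_of_antitone_eq_half_l1 {m : ℕ} (hm : 0 < m) (D : Fin m → ℝ)
    (hsum : ∑ j, D j = 0) (hanti : Antitone D) :
    ks m D = (∑ j, |D j|) / 2 := by
  classical
  set S : ℕ → ℝ := fun k => ∑ j : Fin m, if (j : ℕ) < k then D j else 0 with hS
  set A : Finset (Fin m) := Finset.univ.filter (fun j => 0 ≤ D j) with hAdef
  set t : ℕ := A.card with ht
  have htm : t ≤ m := by
    have := Finset.card_filter_le (Finset.univ : Finset (Fin m)) (fun j => 0 ≤ D j)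
    simpa [ht, hAdef] using this
  -- characterization of A
  have hA : ∀ j : Fin m, 0 ≤ D j ↔ (j : ℕ) < t := by
    intro j
    constructor
    · intro hj
      have hsub : Finset.Iic j ⊆ A := by
        intro i hi
        simp only [Finset.mem_Iic] at hi
        simp only [hAdef, Finset.mem_filter, Finset.mem_univ, true_and]
        exact hj.trans (hanti hi)
      have := Finset.card_le_card hsub
      simpa [Fin.card_Iic] using this.trans_eq rfl
    · intro hj
      by_contra hneg
      push_neg at hneg
      have hsub : A ⊆ Finset.Iio j := by
        intro i hi
        simp only [hAdef, Finset.mem_filter, Finset.mem_univ, true_and] at hi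
        simp only [Finset.mem_Iio]
        by_contra hle
        push_neg at hle
        exact absurd (hi.trans (hanti hle)) (not_le.mpr hneg)
      have := Finset.card_le_card hsub
      rw [Fin.card_Iio] at this
      omega
  -- step lemma
  have hstep : ∀ k, ∀ hk : k < m, S (k + 1) = S k + D ⟨k, hk⟩ := by
    intro k hk
    have : S (k + 1) - S k = D ⟨k, hk⟩ := by
      rw [hS]
      simp only
      rw [← Finset.sum_sub_distrib]
      rw [Finset.sum_eq_single (⟨k, hk⟩ : Fin m)]
      · simp
      · intro b _ hb
        have : (b : ℕ) ≠ k := fun h => hb (Fin.ext h)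
        rcases lt_trichotomy (b : ℕ) k with h | h | h
        · simp [h, Nat.lt_succ_of_lt h]
        · exact absurd h this
        · have h1 : ¬ (b : ℕ) < k := by omega
          have h2 : ¬ (b : ℕ) < k + 1 := by omega
          simp [h1, h2]
      · simp
    linarith
  have hS0 : S 0 = 0 := by simp [hS]
  have hSm : S m = 0 := by
    rw [hS]; simp only
    rw [← hsum]
    exact Finset.sum_congr rfl (fun j _ => by simp [j.isLt])
  -- increasing up to t
  have inc : ∀ l, l ≤ t → ∀ k, k ≤ l → S k ≤ S l := by
    intro l
    induction l with
    | zero => intro _ k hk; have h0 : k = 0 := Nat.le_zero.mp hk; rw [h0]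
    | succ l ih =>
      intro hl k hk
      rcases Nat.eq_or_lt_of_le hk with h | h
      · rw [h]
      · have hk' : k ≤ l := by omega
        have hlm : l < m := by omega
        have hDl : 0 ≤ D ⟨l, hlm⟩ := (hA _).mpr (by simpa using by omega)
        calc S k ≤ S l := ih (by omega) k hk'
          _ ≤ S l + D ⟨l, hlm⟩ := by linarith
          _ = S (l + 1) := (hstep l hlm).symm
  -- decreasing after t
  have dec : ∀ l, l ≤ m → ∀ k, t ≤ k → k ≤ l → S l ≤ S k := by
    intro l
    induction l with
    | zero => intro _ k h1 h2; have h0 : k = 0 := Nat.le_zero.mp h2; rw [h0]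
    | succ l ih =>
      intro hl k h1 h2
      rcases Nat.eq_or_lt_of_le h2 with h | h
      · rw [h]
      · have hk' : k ≤ l := by omega
        have hlm : l < m := by omega
        have hDl : D ⟨l, hlm⟩ < 0 := by
          by_contra hc
          push_neg at hc
          have := (hA ⟨l, hlm⟩).mp hc
          simp at this
          omega
        calc S (l + 1) = S l + D ⟨l, hlm⟩ := hstep l hlm
          _ ≤ S l := by linarith
          _ ≤ S k := ih (by omega) k h1 hk'
  have hnonneg : ∀ k, k ≤ m → 0 ≤ S k := by
    intro k hk
    rcases le_or_gt k t with h | h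
    · have := inc k h 0 (Nat.zero_le _)
      rw [hS0] at this; linarith
    · have := dec m le_rfl k h.le hk
      rw [hSm] at this; linarith
  have hmax : ∀ k, k ≤ m → S k ≤ S t := by
    intro k hk
    rcases le_or_gt k t with h | h
    · exact inc t le_rfl k h
    · exact dec k hk t le_rfl h.le
  -- S t = sum over A
  have hSt : S t = ∑ j ∈ A, D j := by
    rw [hS, hAdef]
    rw [Finset.sum_filter]
    exact Finset.sum_congr rfl (fun j _ => by simp [hA j])
  -- total: ∑ |D j| = 2 * S t
  have hl1 : ∑ j, |D j| = 2 * S t := by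
    have key : ∑ j, (|D j| + D j) = ∑ j, (2 * if 0 ≤ D j then D j else 0) := by
      refine Finset.sum_congr rfl (fun j _ => ?_)
      rcases le_or_gt 0 (D j) with h | h
      · simp [h, abs_of_nonneg h]; ring
      · simp [not_le.mpr h, abs_of_neg h]
    rw [Finset.sum_add_distrib, hsum, add_zero] at key
    rw [key, ← Finset.mul_sum, hSt, hAdef, Finset.sum_filter]
  -- conclude
  have hmem : t ∈ Finset.range (m + 1) := Finset.mem_range.mpr (by omega)
  have hks : ks m D = S t := by
    apply le_antisymm
    · apply Finset.sup'_le
      intro k hk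
      have hk' : k ≤ m := by simpa [Nat.lt_succ_iff] using Finset.mem_range.mp hk
      rw [abs_of_nonneg (hnonneg k hk')]
      exact hmax k hk'
    · have := Finset.le_sup' (f := fun k => |∑ j : Fin m, if (j : ℕ) < k then D j else 0|) hmem
      rw [abs_of_nonneg (hnonneg t htm)] at this
      exact this
  rw [hks, hl1]
  ring
end

section
/- Over all orderings of a list D of m real numbers summing to 0, the Kolmogorov-Smirnov statistic max_k |∑_{j≤k} D(σ(j))| is maximized by any ordering σ sorting D in nonincreasing (or nondecreasing) order. -/
theorem ks_maximized_by_sorting {m : ℕ} (hm : 0 < m) (D : Fin m → ℝ)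
    (hsum : ∑ j, D j = 0) (σ : Equiv.Perm (Fin m))
    (hσ : Antitone (D ∘ σ) ∨ Monotone (D ∘ σ)) :
    ∀ τ : Equiv.Perm (Fin m), ks m (D ∘ τ) ≤ ks m (D ∘ σ) := by
  intro τ
  set P : ℝ := ∑ i ∈ Finset.univ.filter (fun i => 0 < D i), D i with hP
  have hPnonneg : 0 ≤ P :=
    Finset.sum_nonneg (fun i hi => le_of_lt (Finset.mem_filter.mp hi).2)
  -- any subset sum is at most P
  have hub : ∀ s : Finset (Fin m), ∑ i ∈ s, D i ≤ P := by
    intro s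
    calc ∑ i ∈ s, D i ≤ ∑ i ∈ s.filter (fun i => 0 < D i), D i := by
          rw [← Finset.sum_filter_add_sum_filter_not s (fun i => 0 < D i)]
          have : ∑ i ∈ s.filter (fun i => ¬ 0 < D i), D i ≤ 0 :=
            Finset.sum_nonpos (fun i hi => le_of_not_gt (Finset.mem_filter.mp hi).2)
          linarith
      _ ≤ P := Finset.sum_le_sum_of_subset_of_nonneg
          (Finset.filter_subset_filter _ (Finset.subset_univ s))
          (fun i hi _ => le_of_lt (Finset.mem_filter.mp hi).2)
  have habs : ∀ s : Finset (Fin m), |∑ i ∈ s, D i| ≤ P := by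
    intro s
    rw [abs_le]
    refine ⟨?_, hub s⟩
    have h1 : ∑ i ∈ sᶜ, D i ≤ P := hub _
    have h2 : ∑ i ∈ s, D i + ∑ i ∈ sᶜ, D i = 0 := by
      rw [Finset.sum_add_sum_compl]; exact hsum
    linarith
  -- ks (D ∘ τ) ≤ P
  have hks_le : ks m (D ∘ τ) ≤ P := by
    apply Finset.sup'_le
    intro k _
    have he : (∑ j : Fin m, if (j : ℕ) < k then (D ∘ τ) j else 0)
        = ∑ i ∈ (Finset.univ.filter (fun j : Fin m => (j : ℕ) < k)).image τ, D i := by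
      rw [Finset.sum_image (fun a _ b _ h => τ.injective h), Finset.sum_filter]
      rfl
    rw [he]
    exact habs _
  refine hks_le.trans ?_
  -- downward-closed sets are prefixes
  have key : ∀ s : Finset (Fin m), (∀ j ∈ s, ∀ j' : Fin m, j' ≤ j → j' ∈ s) →
      Finset.univ.filter (fun j : Fin m => (j : ℕ) < s.card) = s := by
    intro s hs
    have hsub : s ⊆ Finset.univ.filter (fun j : Fin m => (j : ℕ) < s.card) := by
      intro j hj
      simp only [Finset.mem_filter, Finset.mem_univ, true_and]
      have hsub' : Finset.Iic j ⊆ s := fun j' hj' => hs j hj j' (Finset.mem_Iic.mp hj')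
      have hc := Finset.card_le_card hsub'
      rw [Fin.card_Iic] at hc
      omega
    have hcard : (Finset.univ.filter (fun j : Fin m => (j : ℕ) < s.card)).card ≤ s.card := by
      calc (Finset.univ.filter (fun j : Fin m => (j : ℕ) < s.card)).card
          ≤ (Finset.range s.card).card :=
            Finset.card_le_card_of_injOn (fun j : Fin m => (j : ℕ))
              (fun j hj => Finset.mem_range.mpr (Finset.mem_filter.mp hj).2)
              (fun a _ b _ h => Fin.val_injective h)
        _ = s.card := Finset.card_range _
    exact (Finset.eq_of_subset_of_card_le hsub hcard).symm
  -- a lower bound for ks (D ∘ σ) from any downward-closed set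
  have lower : ∀ s : Finset (Fin m), (∀ j ∈ s, ∀ j' : Fin m, j' ≤ j → j' ∈ s) →
      |∑ j ∈ s, D (σ j)| ≤ ks m (D ∘ σ) := by
    intro s hs
    have hk : s.card ∈ Finset.range (m + 1) := by
      have := Finset.card_le_card (Finset.subset_univ s)
      simp only [Finset.card_univ, Fintype.card_fin] at this
      exact Finset.mem_range.mpr (by omega)
    have := Finset.le_sup' (f := fun k =>
      |∑ j : Fin m, if (j : ℕ) < k then (D ∘ σ) j else 0|) hk
    refine le_trans (le_of_eq ?_) this
    rw [← Finset.sum_filter, key s hs]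
    rfl
  rcases hσ with hA | hM
  · -- nonincreasing: positives form a prefix
    set s : Finset (Fin m) := Finset.univ.filter (fun j => 0 < D (σ j)) with hsdef
    have hdc : ∀ j ∈ s, ∀ j' : Fin m, j' ≤ j → j' ∈ s := by
      intro j hj j' hle
      simp only [hsdef, Finset.mem_filter, Finset.mem_univ, true_and] at hj ⊢
      exact lt_of_lt_of_le hj (hA hle)
    have hsum_s : ∑ j ∈ s, D (σ j) = P := by
      rw [hP]
      exact Finset.sum_equiv σ (fun j => by simp [hsdef]) (fun j _ => rfl)
    have := lower s hdc
    rw [hsum_s, abs_of_nonneg hPnonneg] at this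
    exact this
  · -- nondecreasing: negatives form a prefix
    set s : Finset (Fin m) := Finset.univ.filter (fun j => D (σ j) < 0) with hsdef
    have hdc : ∀ j ∈ s, ∀ j' : Fin m, j' ≤ j → j' ∈ s := by
      intro j hj j' hle
      simp only [hsdef, Finset.mem_filter, Finset.mem_univ, true_and] at hj ⊢
      exact lt_of_le_of_lt (hM hle) hj
    have hneg : ∑ i ∈ Finset.univ.filter (fun i => D i < 0), D i = -P := by
      have h := hsum
      rw [← Finset.sum_filter_add_sum_filter_not Finset.univ (fun i => 0 < D i)] at h
      have he : ∑ i ∈ Finset.univ.filter (fun i => ¬ 0 < D i), D i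
          = ∑ i ∈ Finset.univ.filter (fun i => D i < 0), D i := by
        rw [Finset.sum_filter, Finset.sum_filter]
        refine Finset.sum_congr rfl (fun i _ => ?_)
        rcases lt_trichotomy (D i) 0 with h' | h' | h'
        · simp [h', not_lt.mpr h'.le]
        · simp [h']
        · simp [h', not_lt.mpr h'.le]
      rw [he] at h
      linarith
    have hsum_s : ∑ j ∈ s, D (σ j) = -P := by
      rw [← hneg]
      exact Finset.sum_equiv σ (fun j => by simp [hsdef]) (fun j _ => rfl)
    have := lower s hdc
    rw [hsum_s, abs_neg, abs_of_nonneg hPnonneg] at this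
    exact this
end
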